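/- Let X have the Binomial(N, c/N) distribution with 0 < c < 1, let (S_k) be a random walk with S_0 = 1 and i.i.d. steps distributed as X - 1, and let τ = inf{k : S_k = 0}. Then for every y ≥ 1, P(τ ≥ y) ≤ (1/c) exp(-(c - 1 - ln c) y). -/

import Mathlib

/-!
The walk is skip-free downwards (its steps are `≥ -1`), so if it has not hit `0` during the
first `y - 1` steps it still satisfies `S_{y-1} ≥ 1`, i.e. the first `y - 1` steps have a
nonnegative sum. The Chernoff bound at `θ = -log c` bounds the probability of that by the
`(y - 1)`-th power of the mgf of a step, which `1 + x ≤ eˣ` bounds by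
`e^{-θ} exp (c (e^θ - 1)) = exp (-(c - 1 - log c))`; the factor `1 / c ≥ exp (c - 1 - log c)`
pays for the missing `y`-th step.
-/

open MeasureTheory ProbabilityTheory Real Finset
open scoped unitInterval

theorem MeasureTheory.Measure.le_of_forall_measure_singleton_le {α : Type*} [MeasurableSpace α]
    [Countable α] [MeasurableSingletonClass α] {μ ν : Measure α} (h : ∀ a, μ {a} ≤ ν {a}) :
    μ ≤ ν := by
  refine Measure.le_iff.2 fun s hs ↦ ?_
  rw [← tsum_indicator_apply_singleton μ s hs, ← tsum_indicator_apply_singleton ν s hs]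
  exact ENNReal.tsum_le_tsum fun a ↦ Set.indicator_le_indicator (h a)

theorem sum_range_nonneg_of_neg_one_le {x : ℕ → ℤ} {m : ℕ} (hx : ∀ j < m, -1 ≤ x j)
    (hne : ∀ k ≤ m, 1 + ∑ j ∈ range k, x j ≠ 0) : 0 ≤ ∑ j ∈ range m, x j := by
  induction m with
  | zero => simp
  | succ m ih =>
    have hm := ih (fun j hj ↦ hx j (by omega)) (fun k hk ↦ hne k (by omega))
    have hstep := hx m (by omega)
    have hne_m := hne (m + 1) le_rfl
    rw [sum_range_succ] at hne_m ⊢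
    omega

theorem exp_neg_pow_pred_le {c : ℝ} (hc0 : 0 < c) (hc1 : c ≤ 1) {y : ℕ} (hy : 1 ≤ y) :
    exp (-(c - 1 - log c)) ^ (y - 1) ≤ 1 / c * exp (-((c - 1 - log c) * y)) :=
  calc exp (-(c - 1 - log c)) ^ (y - 1)
      = exp (c - 1 - log c) * exp (-((c - 1 - log c) * y)) := by
        rw [← exp_nat_mul, ← exp_add, Nat.cast_sub hy]
        congr 1
        push_cast
        ring
    _ ≤ 1 / c * exp (-((c - 1 - log c) * y)) := by
        rw [exp_sub, exp_log hc0]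
        gcongr
        exact exp_le_one_iff.2 (by linarith)

namespace ProbabilityTheory

variable {n : ℕ} {p : I}

theorem mgf_binomial (t : ℝ) :
    mgf (fun k : ℕ ↦ (k : ℝ)) Bin(n, p) t = (p * exp t + (1 - p)) ^ n := by
  rw [mgf, integral_binomial, ← Nat.range_succ_eq_Iic, add_pow]
  refine sum_congr rfl fun k _ ↦ ?_
  rw [smul_eq_mul, mul_pow, ← exp_nat_mul]
  ring_nf

theorem mgf_binomial_le (t : ℝ) :
    mgf (fun k : ℕ ↦ (k : ℝ)) Bin(n, p) t ≤ exp (n * p * (exp t - 1)) := by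
  have hp := p.2
  rw [mgf_binomial, mul_assoc, exp_nat_mul]
  refine pow_le_pow_left₀ (by nlinarith [exp_pos t, hp.1, hp.2]) ?_ n
  linarith [add_one_le_exp (p * (exp t - 1))]

section IntegerValued

variable {Ω : Type*} [MeasurableSpace Ω] {μ : Measure Ω} {ξ : Ω → ℤ}

theorem hasLaw_add_one_binomial [IsProbabilityMeasure μ] (hξ : Measurable ξ)
    (h : ∀ k : ℕ, μ {ω | ξ ω = k - 1} =
      ENNReal.ofReal (n.choose k * p ^ k * (1 - p) ^ (n - k))) :
    HasLaw (fun ω ↦ ξ ω + 1) Bin(ℤ, n, p) μ where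
  aemeasurable := (hξ.add_const 1).aemeasurable
  map_eq := by
    have := Measure.isProbabilityMeasure_map (μ := μ) (hξ.add_const 1).aemeasurable
    -- both sides are probability measures, so matching `Bin(ℤ, n, p)` from below suffices
    refine (Measure.eq_of_le_of_isProbabilityMeasure
      (Measure.le_of_forall_measure_singleton_le fun z ↦ ?_)).symm
    rw [Measure.map_apply (hξ.add_const 1) (measurableSet_singleton z)]
    cases z with
    | ofNat k =>
      rw [Int.ofNat_eq_natCast, map_cast_binomial_singleton, ← h k]
      exact (congrArg μ (Set.ext fun ω ↦ eq_sub_iff_add_eq.symm)).ge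
    | negSucc k =>
      rw [Measure.map_apply .of_discrete (measurableSet_singleton _),
        Set.preimage_eq_empty (by simp), measure_empty]
      exact zero_le

theorem HasLaw.ae_neg_one_le_of_add_one_binomial
    (hξ : HasLaw (fun ω ↦ ξ ω + 1) Bin(ℤ, n, p) μ) : ∀ᵐ ω ∂μ, -1 ≤ ξ ω := by
  have hbin : ∀ᵐ z ∂Bin(ℤ, n, p), 0 ≤ z :=
    (ae_map_iff .of_discrete .of_discrete).2 (ae_of_all _ fun k ↦ Int.natCast_nonneg k)
  filter_upwards [(hξ.ae_iff (p := fun z ↦ 0 ≤ z) .of_discrete).2 hbin] with ω hω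
  omega

theorem HasLaw.integrable_exp_mul_of_add_one_binomial
    (hξ : HasLaw (fun ω ↦ ξ ω + 1) Bin(ℤ, n, p) μ) (t : ℝ) :
    Integrable (fun ω ↦ exp (t * ξ ω)) μ := by
  have hf : (fun ω ↦ exp (t * ξ ω)) =
      (fun z : ℤ ↦ exp (t * ((z : ℝ) - 1))) ∘ (fun ω ↦ ξ ω + 1) := by
    ext ω; simp
  rw [hf, ← integrable_map_measure .of_discrete hξ.aemeasurable, hξ.map_eq]
  exact integrable_map_cast_binomial _

theorem HasLaw.mgf_intCast_of_add_one_binomial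
    (hξ : HasLaw (fun ω ↦ ξ ω + 1) Bin(ℤ, n, p) μ) (t : ℝ) :
    mgf (fun ω ↦ (ξ ω : ℝ)) μ t = exp (-t) * mgf (fun k : ℕ ↦ (k : ℝ)) Bin(n, p) t := by
  have hf : (fun ω ↦ exp (t * ξ ω)) =
      (fun z : ℤ ↦ exp (t * ((z : ℝ) - 1))) ∘ (fun ω ↦ ξ ω + 1) := by
    ext ω; simp
  rw [mgf, mgf, hf, hξ.integral_comp .of_discrete, integral_map .of_discrete .of_discrete,
    ← integral_const_mul]
  refine integral_congr_ae (ae_of_all _ fun k ↦ ?_)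
  simp only [Int.cast_natCast, ← exp_add]
  ring_nf

theorem HasLaw.mgf_neg_log_le_of_add_one_binomial
    (hξ : HasLaw (fun ω ↦ ξ ω + 1) Bin(ℤ, n, p) μ) {c : ℝ} (hc0 : 0 < c) (hc1 : c ≤ 1)
    (hnp : (n : ℝ) * p ≤ c) : mgf (fun ω ↦ (ξ ω : ℝ)) μ (-log c) ≤ exp (-(c - 1 - log c)) := by
  have hexp : exp (-log c) = c⁻¹ := by rw [exp_neg, exp_log hc0]
  have hgap : 0 ≤ exp (-log c) - 1 := by rw [hexp, sub_nonneg]; exact (one_le_inv₀ hc0).2 hc1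
  calc mgf (fun ω ↦ (ξ ω : ℝ)) μ (-log c)
      ≤ exp (-(-log c)) * exp (n * p * (exp (-log c) - 1)) := by
        rw [hξ.mgf_intCast_of_add_one_binomial]
        gcongr
        exact mgf_binomial_le _
    _ ≤ exp (log c) * exp (c * (exp (-log c) - 1)) := by rw [neg_neg]; gcongr
    _ = exp (-(c - 1 - log c)) := by
        rw [← exp_add, hexp]
        congr 1
        field_simp
        ring

end IntegerValued

theorem iIndepFun.measureReal_sum_nonneg_le_pow {Ω ι : Type*} [MeasurableSpace Ω]
    {μ : Measure Ω} [IsProbabilityMeasure μ] {X : ι → Ω → ℝ} (hindep : iIndepFun X μ)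
    (hmeas : ∀ i, Measurable (X i)) {t B : ℝ} (ht : 0 ≤ t)
    (hint : ∀ i, Integrable (fun ω ↦ exp (t * X i ω)) μ) (hB : ∀ i, mgf (X i) μ t ≤ B)
    (s : Finset ι) : μ.real {ω | 0 ≤ (∑ i ∈ s, X i) ω} ≤ B ^ #s :=
  calc μ.real {ω | 0 ≤ (∑ i ∈ s, X i) ω}
      ≤ exp (-t * 0) * mgf (∑ i ∈ s, X i) μ t :=
        measure_ge_le_exp_mul_mgf 0 ht (hindep.integrable_exp_mul_sum hmeas fun i _ ↦ hint i)
    _ = ∏ i ∈ s, mgf (X i) μ t := by rw [mul_zero, exp_zero, one_mul, hindep.mgf_sum hmeas]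
    _ ≤ ∏ _i ∈ s, B := prod_le_prod (fun _ _ ↦ mgf_nonneg) fun i _ ↦ hB i
    _ = B ^ #s := prod_const B

end ProbabilityTheory

-- `S_k = 1 + ∑_{j<k} η_j`, and the event `τ ≥ y` is `∀ k < y, S_k ≠ 0`.
/-- Let `X ~ Binomial(N, c/N)` with `0 < c < 1`, let `S_k = 1 + ∑_{j<k} η_j`
be a random walk with i.i.d. steps `η_j` distributed as `X - 1`, and let
`τ = inf{k : S_k = 0}`.  Then for every `y ≥ 1`,
`P(τ ≥ y) ≤ (1/c) exp(-(c - 1 - ln c) y)`.  (The event `τ ≥ y` is `∀ k < y, S_k ≠ 0`.) -/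
theorem total_progeny_tail_bound {Ω : Type*} [MeasurableSpace Ω] (μ : Measure Ω)
    [IsProbabilityMeasure μ] (N : ℕ) (hN : 0 < N) (c : ℝ) (hc0 : 0 < c) (hc1 : c < 1)
    (η : ℕ → Ω → ℤ)
    (hηmeas : ∀ i, Measurable (η i))
    (hηdist : ∀ i : ℕ, ∀ k : ℕ, μ {ω | η i ω = (k : ℤ) - 1}
      = ENNReal.ofReal ((N.choose k : ℝ) * (c / N) ^ k * (1 - c / N) ^ (N - k)))
    (hηindep : iIndepFun η μ) :
    ∀ y : ℕ, 1 ≤ y →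
      (μ {ω | ∀ k < y, (1 + ∑ j ∈ Finset.range k, η j ω) ≠ 0}).toReal
        ≤ (1 / c) * Real.exp (-((c - 1 - Real.log c) * y)) := by
  intro y hy
  have hN1 : (1 : ℝ) ≤ N := by exact_mod_cast hN
  let p : I := ⟨c / N, by positivity, div_le_one_of_le₀ (by linarith) (by positivity)⟩
  have hlaw (i : ℕ) : HasLaw (fun ω ↦ η i ω + 1) Bin(ℤ, N, p) μ :=
    hasLaw_add_one_binomial (hηmeas i) (hηdist i)
  have hNp : (N : ℝ) * p ≤ c := (mul_div_cancel₀ c (by positivity)).le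
  let X (i : ℕ) (ω : Ω) : ℝ := η i ω
  have hevent : μ {ω | ∀ k < y, 1 + ∑ j ∈ range k, η j ω ≠ 0}
      ≤ μ {ω | 0 ≤ (∑ j ∈ range (y - 1), X j) ω} := by
    refine measure_mono_ae ?_
    filter_upwards [ae_all_iff.2 fun i ↦ (hlaw i).ae_neg_one_le_of_add_one_binomial]
      with ω hstep hω
    have hsum := sum_range_nonneg_of_neg_one_le (m := y - 1) (fun j _ ↦ hstep j)
      fun k hk ↦ hω k (by omega)
    simp only [Finset.sum_apply, X]
    exact_mod_cast hsum
  calc (μ {ω | ∀ k < y, 1 + ∑ j ∈ range k, η j ω ≠ 0}).toReal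
      ≤ μ.real {ω | 0 ≤ (∑ j ∈ range (y - 1), X j) ω} :=
        ENNReal.toReal_mono (measure_ne_top _ _) hevent
    _ ≤ exp (-(c - 1 - log c)) ^ #(range (y - 1)) :=
        (hηindep.comp (fun _ ↦ Int.cast) fun _ ↦ .of_discrete).measureReal_sum_nonneg_le_pow
          (fun i ↦ Measurable.of_discrete.comp (hηmeas i))
          (neg_nonneg.2 (log_nonpos hc0.le hc1.le))
          (fun i ↦ (hlaw i).integrable_exp_mul_of_add_one_binomial _)
          (fun i ↦ (hlaw i).mgf_neg_log_le_of_add_one_binomial hc0 hc1.le hNp) _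
    _ ≤ 1 / c * exp (-((c - 1 - log c) * y)) := by
        rw [card_range]
        exact exp_neg_pow_pred_le hc0 hc1.le hy
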